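/- arXiv:1804.07221 — 9 statements merged into one kernel-verified Lean document; each statement's English description precedes it below -/
import Mathlib

section
/- A state s belongs to the strong basin of attractor A if and only if every transition s → s' leads to a state s' in the strong basin of A, provided s lies in the weak basin of A; moreover the strong basin of A is a subset of the weak basin of A. -/
/-- Reachability: reflexive-transitive closure of the transition relation. -/
def reach {σ : Type*} (r : σ → σ → Prop) : σ → σ → Prop := Relation.ReflTransGen r

/-- An attractor: a set `A` with `reach(s) = A` for every `s ∈ A`. -/
def IsAttractor {σ : Type*} (r : σ → σ → Prop) (A : Set σ) : Prop :=
  ∀ s ∈ A, {t | reach r s t} = A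

/-- Weak basin of attraction. -/
def basW {σ : Type*} (r : σ → σ → Prop) (A : Set σ) : Set σ :=
  {s | ∃ t ∈ A, reach r s t}

/-- Strong basin of attraction. -/
def basS {σ : Type*} (r : σ → σ → Prop) (A : Set σ) : Set σ :=
  basW r A \ ⋃ A' ∈ {B : Set σ | IsAttractor r B ∧ B ≠ A}, basW r A'

/-- One-step predecessors of a set of states. -/
def pre {σ : Type*} (r : σ → σ → Prop) (T : Set σ) : Set σ := {s | ∃ t ∈ T, r s t}

/-- One-step successors of a set of states. -/
def post {σ : Type*} (r : σ → σ → Prop) (T : Set σ) : Set σ := {t | ∃ s ∈ T, r s t}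

/-- The operator `F(T) = T \ (pre(post(T) \ T) ∩ T)`. -/
def Fop {σ : Type*} (r : σ → σ → Prop) (T : Set σ) : Set σ :=
  T \ (pre r (post r T \ T) ∩ T)

lemma mem_basS_iff {σ : Type*} (r : σ → σ → Prop) (A : Set σ) (s : σ) :
    s ∈ basS r A ↔ s ∈ basW r A ∧
      ∀ A' : Set σ, IsAttractor r A' → A' ≠ A → s ∉ basW r A' := by
  simp [basS, Set.mem_diff, Set.mem_iUnion]


lemma attractor_eq {σ : Type*} {r : σ → σ → Prop} {A A' : Set σ} {u : σ}
    (hA : IsAttractor r A) (hA' : IsAttractor r A') (hu : u ∈ A) (hu' : u ∈ A') :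
    A = A' := by
  rw [← hA u hu, ← hA' u hu']

/-- Provided `s` lies in the weak basin of `A`, `s` belongs to the strong basin of `A` iff every
transition from `s` leads into the strong basin; moreover `basS(A) ⊆ basW(A)`. -/
theorem stmt3 {σ : Type*} [Fintype σ] (r : σ → σ → Prop)
    (hall : ∀ s : σ, ∃ A : Set σ, IsAttractor r A ∧ s ∈ basW r A)
    (A : Set σ) (hA : IsAttractor r A) :
    (∀ s ∈ basW r A, (s ∈ basS r A ↔ ∀ s', r s s' → s' ∈ basS r A)) ∧
      basS r A ⊆ basW r A := by
  constructor
  · intro s hs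
    constructor
    · -- forward
      intro hsS s' hss'
      rw [mem_basS_iff] at hsS ⊢
      obtain ⟨-, hno⟩ := hsS
      constructor
      · obtain ⟨B, hB, tB, htB, hreach⟩ := hall s'
        have : B = A := by
          by_contra hne
          exact hno B hB hne ⟨tB, htB, Relation.ReflTransGen.head hss' hreach⟩
        exact this ▸ ⟨tB, htB, hreach⟩
      · intro A' hA' hne ⟨t, ht, hreach⟩
        exact hno A' hA' hne ⟨t, ht, Relation.ReflTransGen.head hss' hreach⟩
    · -- backward
      intro hsucc
      rw [mem_basS_iff]
      refine ⟨hs, fun A' hA' hne ⟨t, ht, hreach⟩ => ?_⟩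
      rcases (Relation.ReflTransGen.cases_head hreach) with heq | ⟨s', hss', hreach'⟩
      · -- s = t ∈ A'
        subst heq
        obtain ⟨u, hu, hru⟩ := hs
        have : u ∈ A' := by rw [← hA' s ht]; exact hru
        exact hne (attractor_eq hA hA' hu this).symm
      · have := hsucc s' hss'
        rw [mem_basS_iff] at this
        exact this.2 A' hA' hne ⟨t, ht, hreach'⟩
  · exact fun s hs => hs.1
end

section
/- If a state s is not in the strong basin of attractor A, then s is not in F^∞(basW(A)): either s is outside the weak basin of A, or the shortest path from s to another attractor witnesses that s is removed at some finite iteration of F. -/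
/-- If a state `s` is not in the strong basin of `A`, then `s` is not in `F^∞(basW(A))`. -/
theorem stmt6 {σ : Type*} [Fintype σ] (r : σ → σ → Prop)
    (hall : ∀ s : σ, ∃ A : Set σ, IsAttractor r A ∧ s ∈ basW r A)
    (A : Set σ) (hA : IsAttractor r A) (s : σ) (hs : s ∉ basS r A) :
    s ∉ ⋂ k : ℕ, (Fop r)^[k] (basW r A) := by
  intro hmem
  simp only [Set.mem_iInter] at hmem
  have hsW : s ∈ basW r A := hmem 0
  have hU : s ∈ ⋃ A' ∈ {B : Set σ | IsAttractor r B ∧ B ≠ A}, basW r A' := by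
    by_contra h
    exact hs ⟨hsW, h⟩
  simp only [Set.mem_iUnion, Set.mem_setOf_eq] at hU
  obtain ⟨A', ⟨hA', hne⟩, t, htA', hrt⟩ := hU
  have htn : t ∉ basW r A := by
    rintro ⟨u, huA, hru⟩
    have hu' : u ∈ A' := by
      rw [← hA' t htA']; exact hru
    exact hne (by rw [← hA' u hu', hA u huA])
  have key : ∀ x, reach r x t → x ∈ basW r A →
      ∃ k, x ∉ (Fop r)^[k] (basW r A) := by
    intro x hx
    induction hx using Relation.ReflTransGen.head_induction_on with
    | refl => exact fun h => absurd h htn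
    | head hab hbt ih =>
      rename_i a b
      intro haW
      have hb : ∃ k, b ∉ (Fop r)^[k] (basW r A) := by
        by_cases hbW : b ∈ basW r A
        · exact ih hbW
        · exact ⟨0, by simpa using hbW⟩
      obtain ⟨k, hk⟩ := hb
      by_cases hak : a ∈ (Fop r)^[k] (basW r A)
      · refine ⟨k + 1, ?_⟩
        rw [Function.iterate_succ_apply']
        intro hmem'
        exact hmem'.2 ⟨⟨b, ⟨⟨a, hak, hab⟩, hk⟩, hab⟩, hak⟩
      · exact ⟨k, hak⟩
  obtain ⟨k, hk⟩ := key s hrt hsW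
  exact hk (hmem k)
end

section
/- If a state s is not in F^∞(basW(A)) then s is not in the strong basin of A: by induction on the iteration step at which s is removed, s has a transition to a state outside the weak basin of A or to a state already known to be outside the strong basin. -/
lemma basS_closed {σ : Type*} (r : σ → σ → Prop)
    (hall : ∀ s : σ, ∃ A : Set σ, IsAttractor r A ∧ s ∈ basW r A)
    (A : Set σ) {s t : σ} (hs : s ∈ basS r A) (hst : r s t) : t ∈ basS r A := by
  obtain ⟨hsW, hsN⟩ := hs
  have hnot : ∀ A' : Set σ, IsAttractor r A' → A' ≠ A → t ∉ basW r A' := by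
    intro A' hA' hne ht
    apply hsN
    simp only [Set.mem_iUnion, Set.mem_setOf_eq]
    refine ⟨A', ⟨hA', hne⟩, ?_⟩
    obtain ⟨u, hu, htu⟩ := ht
    exact ⟨u, hu, Relation.ReflTransGen.head hst htu⟩
  obtain ⟨A'', hA'', htW⟩ := hall t
  have hAeq : A'' = A := by
    by_contra hne
    exact hnot A'' hA'' hne htW
  subst hAeq
  refine ⟨htW, ?_⟩
  intro hmem
  simp only [Set.mem_iUnion, Set.mem_setOf_eq] at hmem
  obtain ⟨A', ⟨hA', hne⟩, ht⟩ := hmem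
  exact hnot A' hA' hne ht

lemma basS_subset_iter {σ : Type*} (r : σ → σ → Prop)
    (hall : ∀ s : σ, ∃ A : Set σ, IsAttractor r A ∧ s ∈ basW r A)
    (A : Set σ) (k : ℕ) : basS r A ⊆ (Fop r)^[k] (basW r A) := by
  induction k with
  | zero => exact fun x hx => hx.1
  | succ n ih =>
      rw [Function.iterate_succ_apply']
      intro x hx
      refine ⟨ih hx, ?_⟩
      rintro ⟨⟨t, ⟨htp, htn⟩, hxt⟩, -⟩
      exact htn (ih (basS_closed r hall A hx hxt))

/-- If a state `s` is not in `F^∞(basW(A))`, then `s` is not in the strong basin of `A`. -/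
theorem stmt7 {σ : Type*} [Fintype σ] (r : σ → σ → Prop)
    (hall : ∀ s : σ, ∃ A : Set σ, IsAttractor r A ∧ s ∈ basW r A)
    (A : Set σ) (hA : IsAttractor r A) (s : σ)
    (hs : s ∉ ⋂ k : ℕ, (Fop r)^[k] (basW r A)) :
    s ∉ basS r A := by
  intro hsS
  exact hs (Set.mem_iInter.2 fun k => basS_subset_iter r hall A k hsS)
end

section
/- For an elementary block B_i of a Boolean network: if there is a path from state s_i to state s'_i in the local transition system of B_i, then there is a path from s to s' in the global transition system, where s and s' project to s_i and s'_i on B_i and agree (with each other) on all nodes outside B_i. -/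
variable {V : Type*} [Fintype V] [DecidableEq V]

/-- Asynchronous (global) transition relation of a Boolean network on node set `V`. -/
def gstep (f : (V → Bool) → V → Bool) (s s' : V → Bool) : Prop :=
  ∃ v, s' = Function.update s v (f s v)

/-- A block `B` is elementary if the update function of every node of `B`
depends only on the nodes in `B`. -/
def Elem (f : (V → Bool) → V → Bool) (B : Set V) : Prop :=
  ∀ v ∈ B, ∀ s t : V → Bool, (∀ u ∈ B, s u = t u) → f s v = f t v

/-- Projection of a global state to a block. -/
def proj (B : Set V) (s : V → Bool) : {v // v ∈ B} → Bool := fun v => s v.1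

/-- Local (asynchronous) transition relation of a block `B`: a node of `B` is updated,
using any global state extending the local one (for elementary `B` this is well defined). -/
def lstep (f : (V → Bool) → V → Bool) (B : Set V)
    (x x' : {v // v ∈ B} → Bool) : Prop :=
  ∃ v : {v // v ∈ B}, ∃ s : V → Bool, proj B s = x ∧ x' = Function.update x v (f s v.1)

/-! Freeze the nodes outside `B` at an arbitrary background state `t` and read a local state
`x` as the global state equal to `x` on `B` and to `t` elsewhere. Because `B` is elementary,
the update value of a node of `B` only depends on `x`, so every local step is the global step
updating the same node, and the nodes outside `B` stay at `t` along the lifted path. -/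

theorem Function.Injective.extend_update {α β γ : Type*} [DecidableEq α] [DecidableEq β]
    {e : α → β} (he : e.Injective) (g : α → γ) (h : β → γ) (a : α) (c : γ) :
    Function.extend e (Function.update g a c) h =
      Function.update (Function.extend e g h) (e a) c := by
  funext b
  by_cases hb : ∃ a', e a' = b
  · obtain ⟨a', rfl⟩ := hb
    simp only [he.extend_apply, Function.update_apply, he.eq_iff]
  · have hne : b ≠ e a := fun h => hb ⟨a, h.symm⟩
    rw [Function.extend_apply' _ _ _ hb, Function.update_of_ne hne, Function.extend_apply' _ _ _ hb]

section Lifting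

variable {N : Type*} {f : (N → Bool) → N → Bool} {B : Set N}

noncomputable def extendState (B : Set N) (t : N → Bool) (x : {v // v ∈ B} → Bool) : N → Bool :=
  Function.extend Subtype.val x t

theorem proj_extendState (t : N → Bool) (x : {v // v ∈ B} → Bool) :
    proj B (extendState B t x) = x :=
  funext fun v => Subtype.val_injective.extend_apply x t v

theorem extendState_of_notMem (t : N → Bool) (x : {v // v ∈ B} → Bool) {v : N} (hv : v ∉ B) :
    extendState B t x v = t v :=
  Function.extend_apply' _ _ _ fun ⟨u, hu⟩ => hv (hu ▸ u.2)

theorem Elem.apply_eq_of_proj_eq (hB : Elem f B) {v : N} (hv : v ∈ B) {s t : N → Bool}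
    (hst : proj B s = proj B t) : f s v = f t v :=
  hB v hv s t fun u hu => congrFun hst ⟨u, hu⟩

theorem Elem.gstep_extendState [DecidableEq N] (hB : Elem f B) (t : N → Bool)
    {x x' : {v // v ∈ B} → Bool} (h : lstep f B x x') :
    gstep f (extendState B t x) (extendState B t x') := by
  obtain ⟨v, s, rfl, rfl⟩ := h
  refine ⟨v.1, ?_⟩
  have hfv : f s v.1 = f (extendState B t (proj B s)) v.1 :=
    hB.apply_eq_of_proj_eq v.2 (proj_extendState t _).symm
  rw [extendState, Subtype.val_injective.extend_update, hfv, extendState]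

theorem Elem.reflTransGen_gstep_extendState [DecidableEq N] (hB : Elem f B) (t : N → Bool)
    {x x' : {v // v ∈ B} → Bool} (h : Relation.ReflTransGen (lstep f B) x x') :
    Relation.ReflTransGen (gstep f) (extendState B t x) (extendState B t x') :=
  h.lift (extendState B t) fun _ _ => hB.gstep_extendState t

end Lifting

/-- For an elementary block `B`: a local path from `x` to `x'` in `TS_B` lifts to a global path
from `s` to `s'` where `s,s'` project to `x,x'` on `B` and agree with each other outside `B`. -/
theorem stmt10 (f : (V → Bool) → V → Bool) (B : Set V) (hB : Elem f B)
    (x x' : {v // v ∈ B} → Bool)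
    (hpath : Relation.ReflTransGen (lstep f B) x x') :
    ∃ s s' : V → Bool, Relation.ReflTransGen (gstep f) s s' ∧
      proj B s = x ∧ proj B s' = x' ∧ ∀ v ∉ B, s v = s' v := by
  let t : V → Bool := fun _ => false
  refine ⟨extendState B t x, extendState B t x', hB.reflTransGen_gstep_extendState t hpath,
    proj_extendState t x, proj_extendState t x', fun v hv => ?_⟩
  rw [extendState_of_notMem t x hv, extendState_of_notMem t x' hv]
end

section
/- If B1 and B2 are disjoint elementary blocks covering all nodes of a Boolean network, then for all global states s, s' there is a path from s to s' in the global transition system if and only if there is a path from s|B1 to s'|B1 in TS_{B1} and a path from s|B2 to s'|B2 in TS_{B2}. -/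
variable {V : Type*} [Fintype V] [DecidableEq V]

lemma proj_gstep (f : (V → Bool) → V → Bool) (B : Set V) {s s' : V → Bool}
    (h : gstep f s s') :
    Relation.ReflTransGen (lstep f B) (proj B s) (proj B s') := by
  obtain ⟨v, hv⟩ := h
  by_cases hvB : v ∈ B
  · refine Relation.ReflTransGen.single ⟨⟨v, hvB⟩, s, rfl, ?_⟩
    funext u
    by_cases huv : u = ⟨v, hvB⟩
    · subst huv
      simp [proj, hv]
    · have hne : u.1 ≠ v := fun h => huv (Subtype.ext h)
      simp [proj, hv, Function.update_of_ne hne, Function.update_of_ne huv]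
  · have heq : proj B s' = proj B s := by
      funext u
      have hne : u.1 ≠ v := fun h => hvB (h ▸ u.2)
      simp [proj, hv, Function.update_of_ne hne]
    rw [heq]

lemma lift_path (f : (V → Bool) → V → Bool) (B C : Set V) (hB : Elem f B)
    (hdisj : Disjoint B C) {x x' : {v // v ∈ B} → Bool}
    (h : Relation.ReflTransGen (lstep f B) x x') (g : V → Bool) (hg : proj B g = x) :
    ∃ g', Relation.ReflTransGen (gstep f) g g' ∧ proj B g' = x' ∧ proj C g' = proj C g := by
  induction h with
  | refl => exact ⟨g, .refl, hg, rfl⟩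
  | @tail b c hbc step ih =>
    obtain ⟨g', hreach, hgB, hgC⟩ := ih
    obtain ⟨v, t, ht, hx'⟩ := step
    have hf : f g' v.1 = f t v.1 := by
      refine hB v.1 v.2 g' t (fun u hu => ?_)
      have h1 : proj B g' ⟨u, hu⟩ = b ⟨u, hu⟩ := congrFun hgB ⟨u, hu⟩
      have h2 : proj B t ⟨u, hu⟩ = b ⟨u, hu⟩ := congrFun ht ⟨u, hu⟩
      exact h1.trans h2.symm
    refine ⟨Function.update g' v.1 (f g' v.1), hreach.tail ⟨v.1, rfl⟩, ?_, ?_⟩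
    · funext u
      by_cases huv : u = v
      · subst huv
        simp [proj, hx', hf]
      · have hne : u.1 ≠ v.1 := fun h => huv (Subtype.ext h)
        have : proj B (Function.update g' v.1 (f g' v.1)) u = b u := by
          simpa [proj, Function.update_of_ne hne] using congrFun hgB u
        rw [this, hx', Function.update_of_ne huv]
    · funext u
      have hne : u.1 ≠ v.1 := by
        intro h
        exact absurd u.2 (fun hc => (hdisj.ne_of_mem v.2 hc) (h.symm))
      simpa [proj, Function.update_of_ne hne] using congrFun hgC u

/-- For disjoint elementary blocks `B1, B2` covering all nodes: a global path from `s` to `s'`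
exists iff local paths exist between the projections in `TS_{B1}` and `TS_{B2}`. -/
theorem stmt12 (f : (V → Bool) → V → Bool) (B1 B2 : Set V)
    (hcov : B1 ∪ B2 = Set.univ) (hdisj : Disjoint B1 B2)
    (hB1 : Elem f B1) (hB2 : Elem f B2) (s s' : V → Bool) :
    Relation.ReflTransGen (gstep f) s s' ↔
      Relation.ReflTransGen (lstep f B1) (proj B1 s) (proj B1 s') ∧
      Relation.ReflTransGen (lstep f B2) (proj B2 s) (proj B2 s') := by

  constructor
  · intro h
    constructor
    · induction h with
      | refl => exact .refl
      | tail _ step ih => exact ih.trans (proj_gstep f B1 step)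
    · induction h with
      | refl => exact .refl
      | tail _ step ih => exact ih.trans (proj_gstep f B2 step)
  · rintro ⟨h1, h2⟩
    obtain ⟨g1, hr1, hg1B1, hg1B2⟩ := lift_path f B1 B2 hB1 hdisj h1 s rfl
    obtain ⟨g2, hr2, hg2B2, hg2B1⟩ := lift_path f B2 B1 hB2 hdisj.symm (hg1B2 ▸ h2) g1 rfl
    have : g2 = s' := by
      funext u
      have hu : u ∈ B1 ∪ B2 := hcov ▸ Set.mem_univ u
      cases hu with
      | inl hu => exact (congrFun (hg2B1.trans hg1B1) ⟨u, hu⟩ : _)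
      | inr hu => exact (congrFun hg2B2 ⟨u, hu⟩ : _)
    exact hr1.trans (this ▸ hr2)
end

section
/- If B1 and B2 are disjoint elementary blocks covering all nodes of a Boolean network, then A is an attractor of the global transition system if and only if there exist attractors A1 of TS_{B1} and A2 of TS_{B2} with A = A1 ⊗ A2. -/
variable {V : Type*} [Fintype V] [DecidableEq V]

section Aux

variable {f : (V → Bool) → V → Bool} {B1 B2 : Set V}

open Classical in
/-- Glue two local states into a global state. -/
noncomputable def glue (B1 B2 : Set V) (hcov : B1 ∪ B2 = Set.univ)
    (x : {v // v ∈ B1} → Bool) (y : {v // v ∈ B2} → Bool) : V → Bool :=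
  fun v => if h : v ∈ B1 then x ⟨v, h⟩ else
    y ⟨v, ((hcov.symm ▸ Set.mem_univ v : v ∈ B1 ∪ B2)).resolve_left h⟩

lemma proj_glue1 (hcov : B1 ∪ B2 = Set.univ) (x : {v // v ∈ B1} → Bool)
    (y : {v // v ∈ B2} → Bool) : proj B1 (glue B1 B2 hcov x y) = x := by
  funext v
  simp [proj, glue, v.2]

lemma proj_glue2 (hcov : B1 ∪ B2 = Set.univ) (hdisj : Disjoint B1 B2)
    (x : {v // v ∈ B1} → Bool) (y : {v // v ∈ B2} → Bool) :
    proj B2 (glue B1 B2 hcov x y) = y := by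
  funext v
  have hv : v.1 ∉ B1 := fun h => Set.disjoint_left.mp hdisj h v.2
  simp [proj, glue, hv]

lemma glue_proj (hcov : B1 ∪ B2 = Set.univ) (s : V → Bool) :
    glue B1 B2 hcov (proj B1 s) (proj B2 s) = s := by
  funext v
  by_cases h : v ∈ B1 <;> simp [glue, proj, h]

lemma proj1_gstep {s s' : V → Bool} (h : gstep f s s') :
    lstep f B1 (proj B1 s) (proj B1 s') ∨ proj B1 s' = proj B1 s := by
  obtain ⟨v, rfl⟩ := h
  by_cases hv : v ∈ B1
  · left
    refine ⟨⟨v, hv⟩, s, rfl, ?_⟩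
    funext w
    simp [proj, Function.update_apply, Subtype.ext_iff]
  · right
    funext w
    have : w.1 ≠ v := fun h => hv (h ▸ w.2)
    simp [proj, Function.update_apply, this]

lemma proj2_gstep {s s' : V → Bool} (h : gstep f s s') :
    lstep f B2 (proj B2 s) (proj B2 s') ∨ proj B2 s' = proj B2 s := by
  obtain ⟨v, rfl⟩ := h
  by_cases hv : v ∈ B2
  · left
    refine ⟨⟨v, hv⟩, s, rfl, ?_⟩
    funext w
    simp [proj, Function.update_apply, Subtype.ext_iff]
  · right
    funext w
    have : w.1 ≠ v := fun h => hv (h ▸ w.2)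
    simp [proj, Function.update_apply, this]

lemma reach_proj1 {s t : V → Bool} (h : reach (gstep f) s t) :
    reach (lstep f B1) (proj B1 s) (proj B1 t) := by
  induction h with
  | refl => exact Relation.ReflTransGen.refl
  | tail _ hst ih =>
      rcases proj1_gstep hst with h' | h'
      · exact ih.tail h'
      · rwa [h']

lemma reach_proj2 {s t : V → Bool} (h : reach (gstep f) s t) :
    reach (lstep f B2) (proj B2 s) (proj B2 t) := by
  induction h with
  | refl => exact Relation.ReflTransGen.refl
  | tail _ hst ih =>
      rcases proj2_gstep hst with h' | h'
      · exact ih.tail h'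
      · rwa [h']

lemma glue_lstep1 (hcov : B1 ∪ B2 = Set.univ) (hB1 : Elem f B1)
    {x x' : {v // v ∈ B1} → Bool} (y : {v // v ∈ B2} → Bool)
    (h : lstep f B1 x x') :
    gstep f (glue B1 B2 hcov x y) (glue B1 B2 hcov x' y) := by
  obtain ⟨v, s, hs, rfl⟩ := h
  refine ⟨v.1, ?_⟩
  have hf : f (glue B1 B2 hcov x y) v.1 = f s v.1 := by
    refine hB1 v.1 v.2 _ _ (fun u hu => ?_)
    have hx : x ⟨u, hu⟩ = s u := by rw [← hs]; rfl
    simp [glue, hu, hx]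
  funext u
  by_cases hu : u ∈ B1
  · have h1 : glue B1 B2 hcov (Function.update x v (f s v.1)) y u
        = Function.update x v (f s v.1) ⟨u, hu⟩ := by simp [glue, hu]
    rw [h1, Function.update_apply, Function.update_apply, hf]
    by_cases h2 : u = v.1
    · simp [h2, Subtype.ext_iff]
    · have : (⟨u, hu⟩ : {v // v ∈ B1}) ≠ v := fun hc => h2 (by rw [← hc])
      simp [h2, this, glue, hu]
  · have hv : u ≠ v.1 := fun h => hu (h ▸ v.2)
    rw [Function.update_apply]
    simp [glue, hu, hv]

lemma glue_lstep2 (hcov : B1 ∪ B2 = Set.univ) (hdisj : Disjoint B1 B2)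
    (hB2 : Elem f B2) (x : {v // v ∈ B1} → Bool)
    {y y' : {v // v ∈ B2} → Bool} (h : lstep f B2 y y') :
    gstep f (glue B1 B2 hcov x y) (glue B1 B2 hcov x y') := by
  obtain ⟨v, s, hs, rfl⟩ := h
  have hv1 : v.1 ∉ B1 := fun h => Set.disjoint_left.mp hdisj h v.2
  refine ⟨v.1, ?_⟩
  have hf : f (glue B1 B2 hcov x y) v.1 = f s v.1 := by
    refine hB2 v.1 v.2 _ _ (fun u hu => ?_)
    have hu1 : u ∉ B1 := fun h => Set.disjoint_left.mp hdisj h hu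
    have hy : y ⟨u, hu⟩ = s u := by rw [← hs]; rfl
    simp [glue, hu1, hy]
  funext u
  by_cases hu : u ∈ B1
  · have hv : u ≠ v.1 := fun h => hv1 (h ▸ hu)
    rw [Function.update_apply]
    simp [glue, hu, hv]
  · rw [Function.update_apply]
    by_cases h2 : u = v.1
    · subst h2
      simp [glue, hu, Function.update_apply, Subtype.ext_iff, hf]
    · simp [glue, hu, Function.update_apply, h2, Subtype.ext_iff]

lemma reach_glue1 (hcov : B1 ∪ B2 = Set.univ) (hB1 : Elem f B1)
    {x x' : {v // v ∈ B1} → Bool} (y : {v // v ∈ B2} → Bool)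
    (h : reach (lstep f B1) x x') :
    reach (gstep f) (glue B1 B2 hcov x y) (glue B1 B2 hcov x' y) := by
  induction h with
  | refl => exact Relation.ReflTransGen.refl
  | tail _ hst ih => exact ih.tail (glue_lstep1 hcov hB1 y hst)

lemma reach_glue2 (hcov : B1 ∪ B2 = Set.univ) (hdisj : Disjoint B1 B2)
    (hB2 : Elem f B2) (x : {v // v ∈ B1} → Bool)
    {y y' : {v // v ∈ B2} → Bool} (h : reach (lstep f B2) y y') :
    reach (gstep f) (glue B1 B2 hcov x y) (glue B1 B2 hcov x y') := by
  induction h with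
  | refl => exact Relation.ReflTransGen.refl
  | tail _ hst ih => exact ih.tail (glue_lstep2 hcov hdisj hB2 x hst)

/-- Path equivalence: global reachability is equivalent to local reachability
in both blocks. -/
lemma reach_iff (hcov : B1 ∪ B2 = Set.univ) (hdisj : Disjoint B1 B2)
    (hB1 : Elem f B1) (hB2 : Elem f B2) {s t : V → Bool} :
    reach (gstep f) s t ↔
      reach (lstep f B1) (proj B1 s) (proj B1 t) ∧
      reach (lstep f B2) (proj B2 s) (proj B2 t) := by
  constructor
  · intro h; exact ⟨reach_proj1 h, reach_proj2 h⟩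
  · rintro ⟨h1, h2⟩
    have r1 : reach (gstep f) s (glue B1 B2 hcov (proj B1 t) (proj B2 s)) := by
      have := reach_glue1 hcov hB1 (f := f) (proj B2 s) h1
      rwa [glue_proj] at this
    have r2 : reach (gstep f) (glue B1 B2 hcov (proj B1 t) (proj B2 s)) t := by
      have := reach_glue2 hcov hdisj hB2 (f := f) (proj B1 t) h2
      rwa [glue_proj] at this
    exact r1.trans r2

end Aux

/-- For disjoint elementary blocks `B1, B2` covering all nodes: `A` is an attractor of the global
transition system iff there are attractors `A1` of `TS_{B1}` and `A2` of `TS_{B2}` with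
`A = A1 ⊗ A2`. -/
theorem stmt13 (f : (V → Bool) → V → Bool) (B1 B2 : Set V)
    (hcov : B1 ∪ B2 = Set.univ) (hdisj : Disjoint B1 B2)
    (hB1 : Elem f B1) (hB2 : Elem f B2) (A : Set (V → Bool)) :
    IsAttractor (gstep f) A ↔
      ∃ (A1 : Set ({v // v ∈ B1} → Bool)) (A2 : Set ({v // v ∈ B2} → Bool)),
        IsAttractor (lstep f B1) A1 ∧ IsAttractor (lstep f B2) A2 ∧
        A = {s | proj B1 s ∈ A1 ∧ proj B2 s ∈ A2} := by
  constructor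
  · intro hA
    rcases A.eq_empty_or_nonempty with rfl | ⟨s0, hs0⟩
    · refine ⟨∅, ∅, ?_, ?_, ?_⟩
      · intro s hs; exact absurd hs (Set.notMem_empty s)
      · intro s hs; exact absurd hs (Set.notMem_empty s)
      · ext s; simp
    · have hAr : A = {t | reach (gstep f) s0 t} := (hA s0 hs0).symm
      have hA1 : proj B1 '' A = {x | reach (lstep f B1) (proj B1 s0) x} := by
        ext x
        constructor
        · rintro ⟨t, ht, rfl⟩
          rw [hAr] at ht
          exact reach_proj1 ht
        · intro hx
          refine ⟨glue B1 B2 hcov x (proj B2 s0), ?_, proj_glue1 hcov x _⟩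
          rw [hAr]
          refine (reach_iff hcov hdisj hB1 hB2).mpr ⟨?_, ?_⟩
          · rwa [proj_glue1]
          · rw [proj_glue2 hcov hdisj]
            exact Relation.ReflTransGen.refl
      have hA2 : proj B2 '' A = {y | reach (lstep f B2) (proj B2 s0) y} := by
        ext y
        constructor
        · rintro ⟨t, ht, rfl⟩
          rw [hAr] at ht
          exact reach_proj2 ht
        · intro hy
          refine ⟨glue B1 B2 hcov (proj B1 s0) y, ?_, proj_glue2 hcov hdisj _ y⟩
          rw [hAr]
          refine (reach_iff hcov hdisj hB1 hB2).mpr ⟨?_, ?_⟩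
          · rw [proj_glue1]
            exact Relation.ReflTransGen.refl
          · rwa [proj_glue2 hcov hdisj]
      refine ⟨proj B1 '' A, proj B2 '' A, ?_, ?_, ?_⟩
      · rintro x ⟨t, ht, rfl⟩
        ext y
        simp only [Set.mem_setOf_eq]
        constructor
        · intro hy
          refine ⟨glue B1 B2 hcov y (proj B2 t), ?_, proj_glue1 hcov y _⟩
          rw [← hA t ht]
          refine (reach_iff hcov hdisj hB1 hB2).mpr ⟨?_, ?_⟩
          · rwa [proj_glue1]
          · rw [proj_glue2 hcov hdisj]
            exact Relation.ReflTransGen.refl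
        · rintro ⟨u, hu, rfl⟩
          have : reach (gstep f) t u := by rw [← hA t ht] at hu; exact hu
          exact reach_proj1 this
      · rintro y ⟨t, ht, rfl⟩
        ext z
        simp only [Set.mem_setOf_eq]
        constructor
        · intro hz
          refine ⟨glue B1 B2 hcov (proj B1 t) z, ?_, proj_glue2 hcov hdisj _ z⟩
          rw [← hA t ht]
          refine (reach_iff hcov hdisj hB1 hB2).mpr ⟨?_, ?_⟩
          · rw [proj_glue1]
            exact Relation.ReflTransGen.refl
          · rwa [proj_glue2 hcov hdisj]
        · rintro ⟨u, hu, rfl⟩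
          have : reach (gstep f) t u := by rw [← hA t ht] at hu; exact hu
          exact reach_proj2 this
      · ext t
        simp only [Set.mem_setOf_eq]
        constructor
        · intro ht
          exact ⟨⟨t, ht, rfl⟩, ⟨t, ht, rfl⟩⟩
        · rintro ⟨h1, h2⟩
          rw [hA1] at h1
          rw [hA2] at h2
          rw [hAr]
          exact (reach_iff hcov hdisj hB1 hB2).mpr ⟨h1, h2⟩
  · rintro ⟨A1, A2, h1, h2, rfl⟩
    intro s hs
    ext t
    simp only [Set.mem_setOf_eq]
    rw [show reach (gstep f) s t ↔ _ from reach_iff hcov hdisj hB1 hB2]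
    constructor
    · rintro ⟨r1, r2⟩
      constructor
      · rw [← h1 _ hs.1]; exact r1
      · rw [← h2 _ hs.2]; exact r2
    · rintro ⟨m1, m2⟩
      rw [← h1 _ hs.1] at m1
      rw [← h2 _ hs.2] at m2
      exact ⟨m1, m2⟩
end

section
/- Let a Boolean network have two blocks B1 (elementary) and B2 (non-elementary with parent B1). Then A is an attractor of the global transition system if and only if A|B1 is an attractor A1 of TS_{B1} and A is an attractor of TS_2, the transition system of B2 generated by the strong basin of A1. -/
variable {V : Type*} [Fintype V] [DecidableEq V]

/-- Restriction of a transition relation to a set of states (a sub-transition-system). -/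
def rrestrict {σ : Type*} (states : Set σ) (r : σ → σ → Prop) : σ → σ → Prop :=
  fun a b => r a b ∧ a ∈ states ∧ b ∈ states

/-- An attractor of the sub-transition-system with the given state set. -/
def IsAttractorOn {σ : Type*} (states : Set σ) (r : σ → σ → Prop) (A : Set σ) : Prop :=
  A ⊆ states ∧ ∀ s ∈ A, {t | reach (rrestrict states r) s t} = A

/-- Weak basin within a sub-transition-system. -/
def basWOn {σ : Type*} (states : Set σ) (r : σ → σ → Prop) (A : Set σ) : Set σ :=
  {s | s ∈ states ∧ ∃ t ∈ A, reach (rrestrict states r) s t}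

/-- Strong basin within a sub-transition-system. -/
def basSOn {σ : Type*} (states : Set σ) (r : σ → σ → Prop) (A : Set σ) : Set σ :=
  basWOn states r A \
    ⋃ A' ∈ {B : Set σ | IsAttractorOn states r B ∧ B ≠ A}, basWOn states r A'

/-! The strong basin of an attractor `A1` of the elementary block `B1` is a trap set, hence so is
its preimage `S` in the global system, and inside a trap set the restricted system has the same
attractors as the whole one. So the condition on `TS_2` just says that `A ⊆ S` and `A` is a global
attractor; `A ⊆ S` holds because an attractor lies in its own strong basin, and `A|B1` is an
attractor because, `B1` being elementary, local steps lift to global ones. -/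

def IsTrapSet {σ : Type*} (r : σ → σ → Prop) (S : Set σ) : Prop :=
  ∀ a ∈ S, ∀ b, r a b → b ∈ S

section TransitionSystem

variable {σ : Type*} {r : σ → σ → Prop}

theorem IsAttractor.mem_iff {A : Set σ} (hA : IsAttractor r A) {s t : σ} (hs : s ∈ A) :
    t ∈ A ↔ reach r s t := by
  rw [← hA s hs]; rfl

theorem IsAttractor.eq_of_mem {A B : Set σ} (hA : IsAttractor r A) (hB : IsAttractor r B)
    {s : σ} (hsA : s ∈ A) (hsB : s ∈ B) : A = B :=
  (hA s hsA).symm.trans (hB s hsB)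

theorem IsAttractor.isTrapSet {A : Set σ} (hA : IsAttractor r A) : IsTrapSet r A :=
  fun _ ha _ hab => (hA.mem_iff ha).2 (.single hab)

theorem IsTrapSet.reach_mem {S : Set σ} (hS : IsTrapSet r S) {s t : σ} (hs : s ∈ S)
    (h : reach r s t) : t ∈ S := by
  induction h with
  | refl => exact hs
  | tail _ hbc ih => exact hS _ ih _ hbc

theorem IsTrapSet.reach_rrestrict_iff {S : Set σ} (hS : IsTrapSet r S) {s t : σ}
    (hs : s ∈ S) : reach (rrestrict S r) s t ↔ reach r s t := by
  refine ⟨Relation.ReflTransGen.mono (fun _ _ h => h.1) _ _, fun h => ?_⟩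
  induction h with
  | refl => exact .refl
  | @tail b c hsb hbc ih =>
    have hb : b ∈ S := hS.reach_mem hs hsb
    exact ih.tail ⟨hbc, hb, hS b hb c hbc⟩

theorem IsTrapSet.isAttractorOn_iff {S A : Set σ} (hS : IsTrapSet r S) :
    IsAttractorOn S r A ↔ A ⊆ S ∧ IsAttractor r A := by
  refine and_congr_right fun hAS => forall₂_congr fun s hs => ?_
  simp only [hS.reach_rrestrict_iff (hAS hs)]

theorem IsAttractor.subset_basS {A : Set σ} (hA : IsAttractor r A) : A ⊆ basS r A := by
  refine fun s hs => ⟨⟨s, hs, .refl⟩, fun hU => ?_⟩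
  obtain ⟨A', ⟨hA', hne⟩, t, htA', hst⟩ := Set.mem_iUnion₂.mp hU
  exact hne (hA'.eq_of_mem hA htA' (hA.isTrapSet.reach_mem hs hst))

/-- The attractor: all states reachable from a state reachable from `x` whose reachable set has
minimal size. -/
theorem exists_isAttractor_reach [Finite σ] (r : σ → σ → Prop) (x : σ) :
    ∃ A : Set σ, IsAttractor r A ∧ ∃ t ∈ A, reach r x t := by
  obtain ⟨t, hxt, hmin⟩ := Set.exists_min_image {t | reach r x t}
    (fun t => Set.ncard {u | reach r t u}) (Set.toFinite _) ⟨x, .refl⟩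
  have hback : ∀ u, reach r t u → reach r u t := fun u htu => by
    have hsub : {w | reach r u w} ⊆ {w | reach r t w} := fun _ => htu.trans
    have heq := Set.eq_of_subset_of_ncard_le hsub (hmin u (hxt.trans htu)) (Set.toFinite _)
    show t ∈ {w | reach r u w}
    rw [heq]
    exact .refl
  refine ⟨{u | reach r t u}, fun s hts => ?_, t, .refl, hxt⟩
  ext u
  exact ⟨fun hsu => hts.trans hsu, fun htu => (hback s hts).trans htu⟩

theorem mem_basW_of_step {A : Set σ} {x y : σ} (hxy : r x y) (hy : y ∈ basW r A) :
    x ∈ basW r A :=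
  let ⟨t, ht, hyt⟩ := hy
  ⟨t, ht, .head hxy hyt⟩

/-- A successor reaches some attractor, which by strongness of the predecessor can only be
`A`. -/
theorem isTrapSet_basS [Finite σ] (A : Set σ) : IsTrapSet r (basS r A) := by
  intro x ⟨_, hx⟩ y hxy
  have hnot : ∀ A', IsAttractor r A' → A' ≠ A → y ∉ basW r A' := fun A' hA' hne hy =>
    hx (Set.mem_biUnion (x := A') ⟨hA', hne⟩ (mem_basW_of_step hxy hy))
  obtain ⟨A', hA', t, ht, hyt⟩ := exists_isAttractor_reach r y
  obtain rfl : A' = A := by_contra fun hne => hnot A' hA' hne ⟨t, ht, hyt⟩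
  refine ⟨⟨t, ht, hyt⟩, fun hU => ?_⟩
  obtain ⟨A'', ⟨hA'', hne⟩, hy⟩ := Set.mem_iUnion₂.mp hU
  exact hnot A'' hA'' hne hy

end TransitionSystem

section Projection

variable {V : Type*} [DecidableEq V] {f : (V → Bool) → V → Bool} {B : Set V}

theorem proj_update_of_mem (s : V → Bool) {v : V} (hv : v ∈ B) (b : Bool) :
    proj B (Function.update s v b) = Function.update (proj B s) ⟨v, hv⟩ b := by
  funext w
  by_cases h : w = ⟨v, hv⟩
  · subst h; simp [proj]
  · have h' : w.1 ≠ v := fun hw => h (Subtype.ext hw)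
    simp [proj, Function.update_of_ne h, Function.update_of_ne h']

theorem proj_update_of_notMem (s : V → Bool) {v : V} (hv : v ∉ B) (b : Bool) :
    proj B (Function.update s v b) = proj B s := by
  funext w
  have h : w.1 ≠ v := fun hw => hv (hw ▸ w.2)
  simp [proj, Function.update_of_ne h]

theorem lstep_proj_or_proj_eq_of_gstep {s s' : V → Bool} (h : gstep f s s') :
    lstep f B (proj B s) (proj B s') ∨ proj B s' = proj B s := by
  obtain ⟨v, rfl⟩ := h
  by_cases hv : v ∈ B
  · exact .inl ⟨⟨v, hv⟩, s, rfl, proj_update_of_mem s hv _⟩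
  · exact .inr (proj_update_of_notMem s hv _)

theorem reach_lstep_proj {s s' : V → Bool} (h : reach (gstep f) s s') :
    reach (lstep f B) (proj B s) (proj B s') := by
  induction h with
  | refl => exact .refl
  | tail _ hbc ih =>
    rcases lstep_proj_or_proj_eq_of_gstep hbc with h | h
    · exact ih.tail h
    · rwa [h]

theorem IsTrapSet.preimage_proj {X : Set ({v // v ∈ B} → Bool)} (hX : IsTrapSet (lstep f B) X) :
    IsTrapSet (gstep f) {s | proj B s ∈ X} := by
  intro a ha b hab
  rcases lstep_proj_or_proj_eq_of_gstep hab with h | h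
  · exact hX _ ha _ h
  · show proj B b ∈ X
    rwa [h]

/-- On an elementary block the update of a local node does not depend on the global
extension. -/
theorem exists_gstep_of_lstep (hB : Elem f B) {x y : {v // v ∈ B} → Bool} (h : lstep f B x y)
    {s : V → Bool} (hs : proj B s = x) : ∃ s', gstep f s s' ∧ proj B s' = y := by
  obtain ⟨v, t, rfl, rfl⟩ := h
  refine ⟨Function.update s v.1 (f s v.1), ⟨v.1, rfl⟩, ?_⟩
  have hf : f s v.1 = f t v.1 := hB v.1 v.2 s t fun u hu => congrFun hs ⟨u, hu⟩
  rw [proj_update_of_mem s v.2, hs, hf]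

theorem exists_reach_gstep_of_reach_lstep (hB : Elem f B) {x y : {v // v ∈ B} → Bool}
    (h : reach (lstep f B) x y) {s : V → Bool} (hs : proj B s = x) :
    ∃ s', reach (gstep f) s s' ∧ proj B s' = y := by
  induction h with
  | refl => exact ⟨s, .refl, hs⟩
  | tail _ hbc ih =>
    obtain ⟨s', hss', hs'⟩ := ih
    obtain ⟨s'', hs's'', hs''⟩ := exists_gstep_of_lstep hB hbc hs'
    exact ⟨s'', hss'.tail hs's'', hs''⟩

theorem IsAttractor.image_proj (hB : Elem f B) {A : Set (V → Bool)}
    (hA : IsAttractor (gstep f) A) : IsAttractor (lstep f B) (proj B '' A) := by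
  rintro _ ⟨s, hs, rfl⟩
  ext y
  constructor
  · intro hy
    obtain ⟨s', hss', rfl⟩ := exists_reach_gstep_of_reach_lstep hB hy rfl
    exact ⟨s', (hA.mem_iff hs).2 hss', rfl⟩
  · rintro ⟨t, ht, rfl⟩
    exact reach_lstep_proj ((hA.mem_iff hs).1 ht)

end Projection

theorem stmt14_general (f : (V → Bool) → V → Bool) (B1 : Set V)
    (hB1 : Elem f B1)
    (A : Set (V → Bool)) :
    IsAttractor (gstep f) A ↔
      (IsAttractor (lstep f B1) (proj B1 '' A) ∧
       IsAttractorOn {s | proj B1 s ∈ basS (lstep f B1) (proj B1 '' A)} (gstep f) A) := by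
  have hS := (isTrapSet_basS (r := lstep f B1) (proj B1 '' A)).preimage_proj
  constructor
  · intro hA
    have hA1 := hA.image_proj hB1
    refine ⟨hA1, hS.isAttractorOn_iff.2 ⟨fun s hs => ?_, hA⟩⟩
    exact hA1.subset_basS (Set.mem_image_of_mem _ hs)
  · exact fun ⟨_, hA⟩ => (hS.isAttractorOn_iff.1 hA).2

/-- Two blocks `B1` (elementary) and `B2` (non-elementary, with parent `B1`) covering all nodes:
`A` is an attractor of the global transition system iff `A|B1` is an attractor `A1` of `TS_{B1}`
and `A` is an attractor of `TS_2`, the transition system of `B2` generated by the strong basin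
of `A1`. -/
theorem stmt14 (f : (V → Bool) → V → Bool) (B1 B2 : Set V)
    (hcov : B1 ∪ B2 = Set.univ) (hB1 : Elem f B1) (hB2 : ¬ Elem f B2)
    (A : Set (V → Bool)) :
    IsAttractor (gstep f) A ↔
      (IsAttractor (lstep f B1) (proj B1 '' A) ∧
       IsAttractorOn {s | proj B1 s ∈ basS (lstep f B1) (proj B1 '' A)} (gstep f) A) :=
  stmt14_general f B1 hB1 A
end

section
/- In the asynchronous transition system of a Boolean network, any state belonging to the strong basin of an attractor A that takes a transition remains in the strong basin of A; hence the strong basin is closed under the transition relation. -/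
/-- In the asynchronous transition system of a Boolean network, the strong basin of an attractor
`A` is closed under the transition relation: if `s ∈ basS(A)` and `s → s'` then `s' ∈ basS(A)`. -/
theorem stmt18 {n : ℕ} (f : (Fin n → Bool) → Fin n → Bool)
    (hall : ∀ s : Fin n → Bool, ∃ A : Set (Fin n → Bool),
      IsAttractor (fun s s' => ∃ i, s' = Function.update s i (f s i)) A ∧
      s ∈ basW (fun s s' => ∃ i, s' = Function.update s i (f s i)) A)
    (A : Set (Fin n → Bool))
    (hA : IsAttractor (fun s s' => ∃ i, s' = Function.update s i (f s i)) A) :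
    ∀ s ∈ basS (fun s s' => ∃ i, s' = Function.update s i (f s i)) A,
      ∀ s', (∃ i, s' = Function.update s i (f s i)) →
        s' ∈ basS (fun s s' => ∃ i, s' = Function.update s i (f s i)) A := by
  set r : (Fin n → Bool) → (Fin n → Bool) → Prop :=
    fun s s' => ∃ i, s' = Function.update s i (f s i) with hr
  intro s hs s' hss'
  obtain ⟨hsW, hsN⟩ := hs
  -- key: for any attractor B, if s' ∈ basW r B then s ∈ basW r B
  have key : ∀ B : Set (Fin n → Bool), s' ∈ basW r B → s ∈ basW r B := by
    intro B ⟨t, htB, hreach⟩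
    exact ⟨t, htB, Relation.ReflTransGen.head hss' hreach⟩
  constructor
  · obtain ⟨B, hB, hs'B⟩ := hall s'
    have hsB := key B hs'B
    by_cases hBA : B = A
    · exact hBA ▸ hs'B
    · exact absurd hsB (by
        intro h
        exact hsN (Set.mem_biUnion (show B ∈ {B | IsAttractor r B ∧ B ≠ A} from ⟨hB, hBA⟩) h))
  · intro h
    simp only [Set.mem_iUnion] at h
    obtain ⟨B, ⟨hB, hBA⟩, hs'B⟩ := h
    exact hsN (Set.mem_biUnion (show B ∈ {B | IsAttractor r B ∧ B ≠ A} from ⟨hB, hBA⟩) (key B hs'B))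
end

section
/- For a Boolean network whose block graph topologically sorts its k basic blocks as B1,...,Bk, the union of the first j basic blocks is an elementary block for every j ≤ k, assuming every node of the network lies in some basic block and parents of nodes in B_j that are outside B_j lie in earlier blocks. -/
variable {V : Type*} [Fintype V] [DecidableEq V]

/-- `dep f u v`: the update function of node `v` depends on node `u`. -/
def dep (f : (V → Bool) → V → Bool) (u v : V) : Prop :=
  ∃ s : V → Bool, f s v ≠ f (Function.update s u (!s u)) v

/-- A block `B` is elementary if all parents (dependencies) of its nodes lie in `B`. -/
def Elementary (f : (V → Bool) → V → Bool) (B : Set V) : Prop :=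
  ∀ v ∈ B, ∀ u, dep f u v → u ∈ B

/-- If the basic blocks `B1, ..., Bk` of a Boolean network are topologically sorted — every node
lies in some block, and any parent of a node of `B_j` lying outside `B_j` lies in an earlier
block — then for every `j` the union of the first `j` blocks is an elementary block. -/
theorem stmt19 (f : (V → Bool) → V → Bool) (k : ℕ) (B : Fin k → Set V)
    (hcov : ∀ v : V, ∃ j : Fin k, v ∈ B j)
    (hpar : ∀ j : Fin k, ∀ v ∈ B j, ∀ u, dep f u v → u ∉ B j → ∃ j' : Fin k, j' < j ∧ u ∈ B j')
    (j : Fin k) :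
    Elementary f (⋃ l ∈ {l : Fin k | l ≤ j}, B l) := by
  intro v hv u hu
  simp only [Set.mem_iUnion, Set.mem_setOf_eq] at hv ⊢
  obtain ⟨l, hl, hvl⟩ := hv
  by_cases h : u ∈ B l
  · exact ⟨l, hl, h⟩
  · obtain ⟨j', hj', huj'⟩ := hpar l v hvl u hu h
    exact ⟨j', le_trans hj'.le hl, huj'⟩
end
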